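/- (Lemma 1, L² bound.) Let (η_i)_{i∈ℤ} be i.i.d. random variables, h a measurable function, and H_i = h(…, η_{i−1}, η_i, η_{i+1}, …) a stationary {0,1}-valued process with π_1 = P(H_i = 1). Let ℱ_i = σ(…, η_{i−1}, η_i) and define the projection operator 𝒫_k ξ = E(ξ|ℱ_k) − E(ξ|ℱ_{k−1}), and δ_i = ‖𝒫_0 H_i‖_{L²}. If c_0 := Σ_{i∈ℤ} δ_i < ∞, then N_n = Σ_{i=1}^n H_i satisfies ‖N_n − nπ_1‖_{L²} ≤ c_0√n. -/

import Mathlib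

open MeasureTheory ProbabilityTheory Filter Set
open scoped NNReal ENNReal Topology

noncomputable section

/-- transport of conditional expectation along a measurable map -/
theorem aux_condexp_comp {Ω α : Type*} {m0 : MeasurableSpace Ω} {𝒢 : MeasurableSpace α}
    [mα : MeasurableSpace α]
    (P : Measure Ω) [IsProbabilityMeasure P]
    (T : Ω → α) (hT : Measurable T) (h𝒢 : 𝒢 ≤ mα)
    (g : α → ℝ) (hg : Integrable g (Measure.map T P)) :
    (fun ω => ((Measure.map T P)[g|𝒢]) (T ω)) =ᵐ[P] P[(fun ω => g (T ω)) | 𝒢.comap T] := by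
  set ν := Measure.map T P with hν
  haveI : IsProbabilityMeasure ν := Measure.isProbabilityMeasure_map hT.aemeasurable
  have hm : 𝒢.comap T ≤ m0 :=
    (MeasurableSpace.comap_mono h𝒢).trans (measurable_iff_comap_le.mp hT)
  have hψsm : StronglyMeasurable[𝒢] (ν[g|𝒢]) := stronglyMeasurable_condExp
  have hTmeas : @Measurable Ω α (𝒢.comap T) 𝒢 T := Measurable.of_comap_le le_rfl
  have hφsm : StronglyMeasurable[𝒢.comap T] (fun ω => (ν[g|𝒢]) (T ω)) :=
    (hψsm.measurable.comp hTmeas).stronglyMeasurable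
  have hψas : AEStronglyMeasurable (ν[g|𝒢]) ν :=
    (hψsm.mono h𝒢).aestronglyMeasurable
  have hφint : Integrable (fun ω => (ν[g|𝒢]) (T ω)) P := by
    have := (integrable_map_measure hψas hT.aemeasurable).mp integrable_condExp
    exact this
  have hfint : Integrable (fun ω => g (T ω)) P := by
    have := (integrable_map_measure hg.aestronglyMeasurable hT.aemeasurable).mp hg
    exact this
  refine ae_eq_condExp_of_forall_setIntegral_eq hm hfint
    (fun s _ _ => hφint.integrableOn) (fun s hs _ => ?_) hφsm.aestronglyMeasurable
  obtain ⟨t, ht, rfl⟩ := hs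
  have htα : MeasurableSet t := h𝒢 _ ht
  calc ∫ x in T ⁻¹' t, (ν[g|𝒢]) (T x) ∂P = ∫ y in t, (ν[g|𝒢]) y ∂ν :=
        (setIntegral_map htα hψas hT.aemeasurable).symm
    _ = ∫ y in t, g y ∂ν := setIntegral_condExp h𝒢 hg ht
    _ = ∫ x in T ⁻¹' t, g (T x) ∂P := setIntegral_map htα hg.aestronglyMeasurable hT.aemeasurable

/-- The cylinder rectangles on `ℤ → ℝ`. -/
def Cyl : Set (Set (ℤ → ℝ)) :=
  {s | ∃ (t : Finset ℤ) (A : ℤ → Set ℝ), (∀ j, MeasurableSet (A j)) ∧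
    s = {x | ∀ j ∈ t, x j ∈ A j}}

theorem Cyl_meas {s : Set (ℤ → ℝ)} (hs : s ∈ Cyl) : MeasurableSet s := by
  obtain ⟨t, A, hA, rfl⟩ := hs
  have : {x : ℤ → ℝ | ∀ j ∈ t, x j ∈ A j} = ⋂ j ∈ t, (fun x => x j) ⁻¹' (A j) := by
    ext x; simp
  rw [this]
  exact MeasurableSet.biInter t.countable_toSet fun j _ => measurable_pi_apply j (hA j)

theorem Cyl_gen : (MeasurableSpace.pi : MeasurableSpace (ℤ → ℝ)) =
    MeasurableSpace.generateFrom Cyl := by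
  apply le_antisymm
  · refine iSup_le fun j => ?_
    rw [MeasurableSpace.comap_le_iff_le_map]
    intro A hA
    refine MeasurableSpace.measurableSet_generateFrom ?_
    refine ⟨{j}, fun i => if i = j then A else univ, fun i => ?_, ?_⟩
    · dsimp only; split <;> simp [hA]
    · ext x; simp
  · rw [MeasurableSpace.generateFrom_le_iff]
    rintro s hs
    exact Cyl_meas hs

theorem Cyl_pi : IsPiSystem Cyl := by
  rintro s₁ ⟨t₁, A₁, hA₁, rfl⟩ s₂ ⟨t₂, A₂, hA₂, rfl⟩ -
  refine ⟨t₁ ∪ t₂, fun j => (if j ∈ t₁ then A₁ j else univ) ∩ (if j ∈ t₂ then A₂ j else univ),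
    fun j => by apply MeasurableSet.inter <;> split <;> simp [hA₁, hA₂], ?_⟩
  ext x
  simp only [Set.mem_inter_iff, Set.mem_setOf_eq, Finset.mem_union]
  constructor
  · rintro ⟨h1, h2⟩ j hj
    constructor
    · split_ifs with h
      exacts [h1 j h, Set.mem_univ _]
    · split_ifs with h
      exacts [h2 j h, Set.mem_univ _]
  · intro hx
    refine ⟨fun j hj => ?_, fun j hj => ?_⟩
    · have := (hx j (Or.inl hj)).1; rwa [if_pos hj] at this
    · have := (hx j (Or.inr hj)).2; rwa [if_pos hj] at this

theorem aux_shift_inv {Ω : Type} [m0 : MeasurableSpace Ω] (P : Measure Ω) [IsProbabilityMeasure P]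
    (η : ℤ → Ω → ℝ) (hηmeas : ∀ i, Measurable (η i))
    (hηiid : iIndepFun η P)
    (hηid : ∀ i, Measure.map (η i) P = Measure.map (η 0) P) (k : ℤ) :
    Measure.map (fun x (j : ℤ) => x (j + k)) (Measure.map (fun ω (j : ℤ) => η j ω) P)
      = Measure.map (fun ω (j : ℤ) => η j ω) P := by
  have hT : Measurable (fun ω (j : ℤ) => η j ω) :=
    measurable_pi_lambda _ fun j => hηmeas j
  have hS : Measurable (fun x (j : ℤ) => x (j + k) : (ℤ → ℝ) → ℤ → ℝ) :=
    measurable_pi_lambda _ fun j => measurable_pi_apply (j + k)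
  have key : ∀ (c : ℤ) (t : Finset ℤ) (A : ℤ → Set ℝ), (∀ j, MeasurableSet (A j)) →
      P {ω | ∀ j ∈ t, η (j + c) ω ∈ A j} = ∏ j ∈ t, (Measure.map (η 0) P) (A j) := by
    intro c t A hA
    have h1 : {ω | ∀ j ∈ t, η (j + c) ω ∈ A j}
        = ⋂ i ∈ t.image (· + c), η i ⁻¹' A (i - c) := by
      ext ω
      simp only [Set.mem_setOf_eq, Set.mem_iInter, Finset.mem_image, Set.mem_preimage]
      constructor
      · rintro hω i ⟨j, hj, rfl⟩
        simpa [add_sub_cancel_right] using hω j hj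
      · intro hω j hj
        simpa [add_sub_cancel_right] using hω (j + c) ⟨j, hj, rfl⟩
    rw [h1, hηiid.meas_biInter (fun i _ => ⟨A (i - c), hA _, rfl⟩)]
    rw [Finset.prod_image (fun a _ b _ h => by omega)]
    refine Finset.prod_congr rfl fun j hj => ?_
    rw [← Measure.map_apply (hηmeas (j + c)) (hA _), hηid (j + c), add_sub_cancel_right]
  refine ext_of_generate_finite Cyl ?_ ?_ ?_
    (by rw [Measure.map_apply hS MeasurableSet.univ, Set.preimage_univ])
  · exact Cyl_gen
  · exact Cyl_pi
  · rintro s hs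
    obtain ⟨t, A, hA, rfl⟩ := hs
    have hsm : MeasurableSet {x : ℤ → ℝ | ∀ j ∈ t, x j ∈ A j} := Cyl_meas ⟨t, A, hA, rfl⟩
    rw [Measure.map_map hS hT, Measure.map_apply (hS.comp hT) hsm,
      Measure.map_apply hT hsm]
    have e1 : (fun x (j : ℤ) => x (j + k)) ∘ (fun ω (j : ℤ) => η j ω) ⁻¹'
        {x : ℤ → ℝ | ∀ j ∈ t, x j ∈ A j} = {ω | ∀ j ∈ t, η (j + k) ω ∈ A j} := rfl
    have e2 : (fun ω (j : ℤ) => η j ω) ⁻¹' {x : ℤ → ℝ | ∀ j ∈ t, x j ∈ A j}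
        = {ω | ∀ j ∈ t, η (j + 0) ω ∈ A j} := by simp
    rw [e1, e2, key k t A hA, key 0 t A hA]

-- products of two L² functions are integrable
theorem aux_mulint {Ω : Type*} [m0 : MeasurableSpace Ω] (P : Measure Ω)
    [IsProbabilityMeasure P] (u v : Ω → ℝ) (hu : MemLp u 2 P) (hv : MemLp v 2 P) :
    Integrable (fun ω => u ω * v ω) P := by
  have h1 : Integrable (fun x => (inner ℝ ((hu.toLp u) x) ((hv.toLp v) x) : ℝ)) P :=
    L2.integrable_inner (𝕜 := ℝ) _ _
  have h2 : Integrable (fun x => (hu.toLp u) x * (hv.toLp v) x) P := by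
    simpa only [RCLike.inner_apply, starRingEnd_apply, star_trivial, mul_comm] using h1
  exact h2.congr (by
    filter_upwards [hu.coeFn_toLp, hv.coeFn_toLp] with ω e1 e2
    rw [e1, e2])
/-- conditional expectation is an L² contraction (for bounded functions) -/
theorem aux_contr {Ω : Type*} {m' : MeasurableSpace Ω} [m0 : MeasurableSpace Ω]
    (P : Measure Ω) [IsProbabilityMeasure P] (hm' : m' ≤ m0) (g : Ω → ℝ) (C : ℝ≥0)
    (hgm : AEStronglyMeasurable g P) (hgb : ∀ᵐ ω ∂P, |g ω| ≤ (C:ℝ)) :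
    eLpNorm (P[g|m']) 2 P ≤ eLpNorm g 2 P := by
  have hg2 : MemLp g 2 P := MemLp.of_bound hgm (C:ℝ)
    (hgb.mono fun ω hω => by rwa [Real.norm_eq_abs])
  have hub : ∀ᵐ ω ∂P, |(P[g|m']) ω| ≤ (C:ℝ) := ae_bdd_condExp_of_ae_bdd hgb
  have husm : AEStronglyMeasurable (P[g|m']) P :=
    (stronglyMeasurable_condExp.mono hm').aestronglyMeasurable
  have hu2 : MemLp (P[g|m']) 2 P := MemLp.of_bound husm (C:ℝ)
    (hub.mono fun ω hω => by rwa [Real.norm_eq_abs])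
  have hu_int : Integrable (fun ω => (P[g|m']) ω * g ω) P := aux_mulint P _ _ hu2 hg2
  have hgint : Integrable g P := hg2.integrable one_le_two
  have step : ∫ ω, (P[g|m']) ω * g ω ∂P = ∫ ω, (P[g|m']) ω * (P[g|m']) ω ∂P := by
    have e1 : ∫ ω, (P[g|m']) ω * g ω ∂P
        = ∫ ω, (P[(fun ω => (P[g|m']) ω * g ω)|m']) ω ∂P :=
      (integral_condExp hm').symm
    have e2 : P[(fun ω => (P[g|m']) ω * g ω)|m']
        =ᵐ[P] fun ω => (P[g|m']) ω * (P[g|m']) ω := by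
      have h3 := condExp_mul_of_stronglyMeasurable_left (μ := P) (m := m')
        stronglyMeasurable_condExp hu_int hgint
      exact h3
    rw [e1, integral_congr_ae e2]
  set X := hu2.toLp _ with hXdef
  set Y := hg2.toLp _ with hYdef
  have hXY : (inner ℝ X Y : ℝ) = ∫ ω, (P[g|m']) ω * g ω ∂P := by
    rw [L2.inner_def]
    apply integral_congr_ae
    filter_upwards [hu2.coeFn_toLp, hg2.coeFn_toLp] with ω e1 e2
    rw [e1, e2]
    simp [RCLike.inner_apply, starRingEnd_apply, star_trivial]; ring
  have hXX : (inner ℝ X X : ℝ) = ∫ ω, (P[g|m']) ω * (P[g|m']) ω ∂P := by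
    rw [L2.inner_def]
    apply integral_congr_ae
    filter_upwards [hu2.coeFn_toLp] with ω e1
    rw [e1]
    simp [RCLike.inner_apply, starRingEnd_apply, star_trivial]; ring
  have hcs : ‖X‖^2 ≤ ‖X‖ * ‖Y‖ := by
    rw [← real_inner_self_eq_norm_sq, hXX, ← step, ← hXY]
    exact real_inner_le_norm X Y
  have hXle : ‖X‖ ≤ ‖Y‖ := by
    rcases (norm_nonneg X).eq_or_lt with h0 | h0
    · rw [← h0]; exact norm_nonneg Y
    · nlinarith [hcs]
  have eX : eLpNorm (P[g|m']) 2 P = ENNReal.ofReal ‖X‖ := by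
    rw [hXdef, Lp.norm_toLp, ENNReal.ofReal_toReal hu2.2.ne]
  have eY : eLpNorm g 2 P = ENNReal.ofReal ‖Y‖ := by
    rw [hYdef, Lp.norm_toLp, ENNReal.ofReal_toReal hg2.2.ne]
  rw [eX, eY]
  exact ENNReal.ofReal_le_ofReal hXle

/-- Lemma 1 (L² bound) of Wu, "On false discovery control under dependence":
for a stationary 0/1-valued process `H_i = h(…, η_{i−1}, η_i, η_{i+1}, …)` of
i.i.d. innovations, if `c₀ = Σ_i ‖𝒫₀ H_i‖ < ∞` then
`‖N_n − nπ₁‖ ≤ c₀ √n`, where `N_n = Σ_{i=1}^n H_i` and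
`𝒫_k ξ = E(ξ|ℱ_k) − E(ξ|ℱ_{k−1})` with `ℱ_i = σ(…, η_{i−1}, η_i)`. -/
theorem stmt8
    {Ω : Type} [m0 : MeasurableSpace Ω] (P : Measure Ω) [IsProbabilityMeasure P]
    -- i.i.d. innovations
    (η : ℤ → Ω → ℝ) (hηmeas : ∀ i, Measurable (η i))
    (hηiid : iIndepFun η P)
    (hηid : ∀ i, Measure.map (η i) P = Measure.map (η 0) P)
    -- the stationary 0/1-valued process H_i = h(…, η_{i−1}, η_i, η_{i+1}, …)
    (h : (ℤ → ℝ) → ℝ) (hhmeas : Measurable h)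
    (H : ℤ → Ω → ℝ) (hH : ∀ i ω, H i ω = h fun j => η (i + j) ω)
    (hH01 : ∀ i ω, H i ω = 0 ∨ H i ω = 1)
    (π1 : ℝ) (hπ1 : ∀ i, (P {ω | H i ω = 1}).toReal = π1)
    -- the filtration ℱ_i = σ(…, η_{i−1}, η_i) and the projections 𝒫_k
    (𝓕 : ℤ → MeasurableSpace Ω)
    (h𝓕 : ∀ i, 𝓕 i = ⨆ j : ℤ, ⨆ _ : j ≤ i, MeasurableSpace.comap (η j) inferInstance)
    (Pk : ℤ → (Ω → ℝ) → Ω → ℝ)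
    (hPk : ∀ k ξ ω, Pk k ξ ω = (P[ξ | 𝓕 k]) ω - (P[ξ | 𝓕 (k-1)]) ω)
    -- δ_i = ‖𝒫₀ H_i‖ and the short-range dependence condition c₀ < ∞
    (δ : ℤ → ENNReal) (hδ : ∀ i, δ i = eLpNorm (Pk 0 (H i)) 2 P)
    (c0 : ENNReal) (hc0 : c0 = ∑' i : ℤ, δ i) (hc0fin : c0 ≠ ⊤)
    -- N_n = Σ_{i=1}^n H_i
    (Nn : ℕ → Ω → ℝ) (hNn : ∀ n ω, Nn n ω = ∑ i ∈ Finset.Icc (1:ℤ) n, H i ω) :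
    ∀ n : ℕ, eLpNorm (fun ω => Nn n ω - n * π1) 2 P
      ≤ c0 * ENNReal.ofReal (Real.sqrt n) := by
  classical
  intro n
  -- ## Part 0 : basic setup
  set T : Ω → (ℤ → ℝ) := fun ω j => η j ω with hTdef
  have hT : Measurable T := measurable_pi_lambda _ fun j => hηmeas j
  set ν : Measure (ℤ → ℝ) := Measure.map T P with hνdef
  haveI : IsProbabilityMeasure ν := Measure.isProbabilityMeasure_map hT.aemeasurable
  set G : ℤ → (ℤ → ℝ) → ℝ := fun i x => h fun j => x (i + j) with hGdef
  have hGmeas : ∀ i, Measurable (G i) := fun i =>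
    hhmeas.comp (measurable_pi_lambda _ fun j => measurable_pi_apply (i + j))
  have hGT : ∀ i ω, G i (T ω) = H i ω := fun i ω => (hH i ω).symm
  set S : ℤ → (ℤ → ℝ) → (ℤ → ℝ) := fun k x j => x (j + k) with hSdef
  have hS : ∀ k, Measurable (S k) := fun k =>
    measurable_pi_lambda _ fun j => measurable_pi_apply (j + k)
  have hSinv : ∀ k, Measure.map (S k) ν = ν := fun k =>
    aux_shift_inv P η hηmeas hηiid hηid k
  set 𝒢 : ℤ → MeasurableSpace (ℤ → ℝ) := fun a =>
    ⨆ j : ℤ, ⨆ _ : j ≤ a, MeasurableSpace.comap (fun x : ℤ → ℝ => x j) inferInstance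
    with h𝒢def
  have h𝒢le : ∀ a, 𝒢 a ≤ MeasurableSpace.pi := fun a =>
    iSup₂_le fun j _ => (measurable_pi_apply j).comap_le
  have hcomapT : ∀ a, (𝒢 a).comap T = 𝓕 a := by
    intro a
    rw [h𝓕 a]
    simp only [h𝒢def, MeasurableSpace.comap_iSup]
    refine iSup_congr fun j => iSup_congr fun _ => ?_
    rw [MeasurableSpace.comap_comp]
    rfl
  have hcomapS : ∀ a k, (𝒢 a).comap (S k) = 𝒢 (a + k) := by
    intro a k
    simp only [h𝒢def, MeasurableSpace.comap_iSup]
    have e : ∀ j : ℤ, (MeasurableSpace.comap (fun x : ℤ → ℝ => x j)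
        inferInstance).comap (S k) = MeasurableSpace.comap (fun x : ℤ → ℝ => x (j + k))
        inferInstance := by
      intro j
      rw [MeasurableSpace.comap_comp]
      rfl
    simp only [e]
    apply le_antisymm
    · exact iSup₂_le fun j hj => le_iSup₂_of_le (j + k) (by omega) le_rfl
    · refine iSup₂_le fun j hj => le_iSup₂_of_le (j - k) (by omega) (le_of_eq ?_)
      rw [sub_add_cancel]
  -- integrability of `G i` with respect to `ν`
  have hGae : ∀ i, ∀ᵐ x ∂ν, ‖G i x‖ ≤ 1 := by
    intro i
    rw [hνdef, ae_map_iff hT.aemeasurable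
      (measurableSet_le (hGmeas i).norm measurable_const)]
    refine Eventually.of_forall fun ω => ?_
    rcases hH01 i ω with h0 | h1
    · simp only [hGT i ω, h0]; norm_num
    · simp only [hGT i ω, h1]; norm_num
  have hGint : ∀ i, Integrable (G i) ν := fun i =>
    Integrable.mono' (integrable_const 1) (hGmeas i).aestronglyMeasurable (hGae i)
  -- ## Part 1 : stationarity of the projection norms
  have condH : ∀ (i a : ℤ), (fun ω => (ν[G i|𝒢 a]) (T ω)) =ᵐ[P] P[H i|𝓕 a] := by
    intro i a
    have h1 := aux_condexp_comp P T hT (h𝒢le a) (G i) (by rw [← hνdef]; exact hGint i)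
    rw [hcomapT a] at h1
    have hfe : (fun ω => G i (T ω)) = H i := funext fun ω => hGT i ω
    rw [hfe] at h1
    exact h1
  have key : ∀ i k : ℤ, eLpNorm (Pk k (H i)) 2 P
      = eLpNorm (fun x => (ν[G (i-k)|𝒢 0]) x - (ν[G (i-k)|𝒢 (-1)]) x) 2 ν := by
    intro i k
    have h1 : Pk k (H i) =ᵐ[P]
        fun ω => (ν[G i|𝒢 k]) (T ω) - (ν[G i|𝒢 (k-1)]) (T ω) := by
      filter_upwards [condH i k, condH i (k-1)] with ω e1 e2
      rw [hPk, ← e1, ← e2]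
    have hψm : AEStronglyMeasurable
        (fun x => (ν[G i|𝒢 k]) x - (ν[G i|𝒢 (k-1)]) x) ν :=
      ((stronglyMeasurable_condExp.mono (h𝒢le k)).sub
        (stronglyMeasurable_condExp.mono (h𝒢le (k-1)))).aestronglyMeasurable
    rw [eLpNorm_congr_ae h1,
      show (fun ω => (ν[G i|𝒢 k]) (T ω) - (ν[G i|𝒢 (k-1)]) (T ω))
        = (fun x => (ν[G i|𝒢 k]) x - (ν[G i|𝒢 (k-1)]) x) ∘ T from rfl]
    rw [hνdef] at hψm ⊢
    rw [← eLpNorm_map_measure hψm hT.aemeasurable, ← hνdef]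
    -- now shift on ν
    have hshift : ∀ a : ℤ, (fun x => (ν[G (i-k)|𝒢 a]) (S k x)) =ᵐ[ν] ν[G i|𝒢 (a+k)] := by
      intro a
      have h2 := aux_condexp_comp ν (S k) (hS k) (h𝒢le a) (G (i-k))
        (by rw [hSinv k]; exact hGint (i-k))
      rw [hSinv k, hcomapS a k] at h2
      have hfe : (fun x => G (i-k) (S k x)) = G i := by
        funext x
        show h _ = h _
        congr 1
        funext j
        show x (i - k + j + k) = x (i + j)
        congr 1
        ring
      rw [hfe] at h2
      exact h2
    have ha := hshift 0; have hb := hshift (-1)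
    rw [zero_add] at ha
    rw [show (-1 : ℤ) + k = k - 1 by ring] at hb
    have e3 : (fun x => (ν[G i|𝒢 k]) x - (ν[G i|𝒢 (k-1)]) x)
        =ᵐ[ν] (fun x => (ν[G (i-k)|𝒢 0]) x - (ν[G (i-k)|𝒢 (-1)]) x) ∘ S k := by
      filter_upwards [ha, hb] with x e1 e2
      simp only [Function.comp_apply]
      rw [← e1, ← e2]
    have hφm : AEStronglyMeasurable
        (fun x => (ν[G (i-k)|𝒢 0]) x - (ν[G (i-k)|𝒢 (-1)]) x) (Measure.map (S k) ν) := by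
      rw [hSinv k]
      exact ((stronglyMeasurable_condExp.mono (h𝒢le 0)).sub
        (stronglyMeasurable_condExp.mono (h𝒢le (-1)))).aestronglyMeasurable
    rw [eLpNorm_congr_ae e3, ← eLpNorm_map_measure hφm (hS k).aemeasurable, hSinv k]
  have hδstat : ∀ i k : ℤ, eLpNorm (Pk k (H i)) 2 P = δ (i - k) := by
    intro i k
    rw [key i k, hδ (i - k), key (i - k) 0]
    rw [sub_zero]
  -- ## Part 2 : basic integrability facts
  set I : Finset ℤ := Finset.Icc (1:ℤ) (n:ℤ) with hIdef
  have hIcard : I.card = n := by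
    rw [hIdef, Int.card_Icc]
    simp
  have hHmeas : ∀ i, Measurable (H i) := by
    intro i
    have e : H i = fun ω => G i (T ω) := funext fun ω => (hGT i ω).symm
    rw [e]; exact (hGmeas i).comp hT
  have hHb : ∀ (i : ℤ) (ω : Ω), ‖H i ω‖ ≤ 1 := by
    intro i ω; rcases hH01 i ω with e | e <;> simp [e]
  have hHint : ∀ i, Integrable (H i) P := fun i =>
    Integrable.mono' (integrable_const 1) (hHmeas i).aestronglyMeasurable
      (Eventually.of_forall (hHb i))
  have hfeq : Nn n = fun ω => ∑ i ∈ I, H i ω := funext fun ω => hNn n ω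
  have hfeqPi : Nn n = ∑ i ∈ I, H i := by
    rw [hfeq]; funext ω; rw [Finset.sum_apply]
  have hfmeas : Measurable (Nn n) := by
    rw [hfeq]; exact Finset.measurable_sum I fun i _ => hHmeas i
  have hfb : ∀ ω, ‖Nn n ω‖ ≤ (n:ℝ) := by
    intro ω
    rw [hNn n ω]
    calc ‖∑ i ∈ Finset.Icc (1:ℤ) (n:ℤ), H i ω‖
        ≤ ∑ i ∈ Finset.Icc (1:ℤ) (n:ℤ), ‖H i ω‖ := norm_sum_le _ _
      _ ≤ ∑ _i ∈ Finset.Icc (1:ℤ) (n:ℤ), 1 := Finset.sum_le_sum fun i _ => hHb i ω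
      _ = (n:ℝ) := by rw [Finset.sum_const, hIcard]; simp
  have hfint : Integrable (Nn n) P :=
    Integrable.mono' (integrable_const (n:ℝ)) hfmeas.aestronglyMeasurable
      (Eventually.of_forall hfb)
  have hf2 : MemLp (Nn n) 2 P :=
    MemLp.of_bound hfmeas.aestronglyMeasurable (n:ℝ) (Eventually.of_forall hfb)
  have hFle : ∀ a, 𝓕 a ≤ m0 := fun a => by
    rw [h𝓕 a]; exact iSup₂_le fun j _ => (hηmeas j).comap_le
  have hFmono : ∀ a b : ℤ, a ≤ b → 𝓕 a ≤ 𝓕 b := by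
    intro a b hab
    rw [h𝓕 a, h𝓕 b]
    exact iSup₂_le fun j hj => le_iSup₂_of_le j (hj.trans hab) le_rfl
  have hcEb : ∀ (m' : MeasurableSpace Ω), ∀ᵐ ω ∂P, |(P[Nn n|m']) ω| ≤ (n:ℝ) := by
    intro m'
    have h1 : ∀ᵐ ω ∂P, |Nn n ω| ≤ ((n : ℝ≥0) : ℝ) :=
      Eventually.of_forall fun ω => by simpa [Real.norm_eq_abs] using hfb ω
    have h2 := ae_bdd_condExp_of_ae_bdd (m := m') h1
    simpa using h2
  have hE2 : ∀ (m' : MeasurableSpace Ω), m' ≤ m0 → MemLp (P[Nn n|m']) 2 P := fun m' hm' =>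
    MemLp.of_bound ((stronglyMeasurable_condExp.mono hm').aestronglyMeasurable) (n:ℝ)
      ((hcEb m').mono fun ω hω => by rwa [Real.norm_eq_abs])
  -- ## Part 3 : orthogonality of the projections
  have hPkdef : ∀ k : ℤ, Pk k (Nn n) = P[Nn n|𝓕 k] - P[Nn n|𝓕 (k-1)] :=
    fun k => funext fun ω => hPk k (Nn n) ω
  have hPksm : ∀ k : ℤ, AEStronglyMeasurable (Pk k (Nn n)) P := by
    intro k
    rw [hPkdef k]
    exact ((stronglyMeasurable_condExp.mono (hFle k)).sub
      (stronglyMeasurable_condExp.mono (hFle (k-1)))).aestronglyMeasurable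
  have hPk2 : ∀ k : ℤ, MemLp (Pk k (Nn n)) 2 P := by
    intro k
    rw [hPkdef k]
    exact (hE2 _ (hFle k)).sub (hE2 _ (hFle (k-1)))
  have horth' : ∀ k l : ℤ, k < l → ∫ ω, Pk k (Nn n) ω * Pk l (Nn n) ω ∂P = 0 := by
    intro k l hkl
    have husm : StronglyMeasurable[𝓕 (l-1)] (Pk k (Nn n)) := by
      rw [hPkdef k]
      exact (stronglyMeasurable_condExp.mono (hFmono k (l-1) (by omega))).sub
        (stronglyMeasurable_condExp.mono (hFmono (k-1) (l-1) (by omega)))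
    have hint1 : Integrable (fun ω => Pk k (Nn n) ω * (P[Nn n|𝓕 l]) ω) P :=
      aux_mulint P _ _ (hPk2 k) (hE2 _ (hFle l))
    have hint2 : Integrable (fun ω => Pk k (Nn n) ω * (P[Nn n|𝓕 (l-1)]) ω) P :=
      aux_mulint P _ _ (hPk2 k) (hE2 _ (hFle (l-1)))
    have hstep : ∫ ω, Pk k (Nn n) ω * (P[Nn n|𝓕 l]) ω ∂P
        = ∫ ω, Pk k (Nn n) ω * (P[Nn n|𝓕 (l-1)]) ω ∂P := by
      have e1 : ∫ ω, Pk k (Nn n) ω * (P[Nn n|𝓕 l]) ω ∂P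
          = ∫ ω, (P[(fun ω => Pk k (Nn n) ω * (P[Nn n|𝓕 l]) ω)|𝓕 (l-1)]) ω ∂P :=
        (integral_condExp (hFle (l-1))).symm
      have e2 : P[(fun ω => Pk k (Nn n) ω * (P[Nn n|𝓕 l]) ω)|𝓕 (l-1)]
          =ᵐ[P] fun ω => Pk k (Nn n) ω * (P[P[Nn n|𝓕 l]|𝓕 (l-1)]) ω :=
        condExp_mul_of_stronglyMeasurable_left husm hint1 integrable_condExp
      have e3 : P[P[Nn n|𝓕 l]|𝓕 (l-1)] =ᵐ[P] P[Nn n|𝓕 (l-1)] :=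
        condExp_condExp_of_le (hFmono (l-1) l (by omega)) (hFle l)
      rw [e1, integral_congr_ae e2]
      apply integral_congr_ae
      filter_upwards [e3] with ω e
      rw [e]
    calc ∫ ω, Pk k (Nn n) ω * Pk l (Nn n) ω ∂P
        = ∫ ω, (Pk k (Nn n) ω * (P[Nn n|𝓕 l]) ω
            - Pk k (Nn n) ω * (P[Nn n|𝓕 (l-1)]) ω) ∂P := by
          apply integral_congr_ae
          apply Eventually.of_forall
          intro ω
          dsimp only
          rw [hPk l]; ring
      _ = 0 := by rw [integral_sub hint1 hint2, hstep, sub_self]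
  have horth : ∀ k l : ℤ, k ≠ l → ∫ ω, Pk k (Nn n) ω * Pk l (Nn n) ω ∂P = 0 := by
    intro k l hne
    rcases hne.lt_or_gt with hlt | hlt
    · exact horth' k l hlt
    · rw [← horth' l k hlt]
      apply integral_congr_ae
      exact Eventually.of_forall fun ω => mul_comm _ _
  -- ## Part 4 : telescoping and projection norm bounds
  have htel : ∀ (v : ℤ → ℝ) (a b : ℤ), a ≤ b →
      ∑ k ∈ Finset.Icc (a+1) b, (v k - v (k-1)) = v b - v a := by
    intro v a b hab
    have main : ∀ b : ℤ, a ≤ b → ∑ k ∈ Finset.Icc (a+1) b, (v k - v (k-1)) = v b - v a := by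
      refine Int.le_induction ?_ ?_
      · have e : Finset.Icc (a+1) a = ∅ := by
          apply Finset.Icc_eq_empty; omega
        rw [e]; simp
      · intro b hb ih
        have hins : Finset.Icc (a+1) (b+1) = insert (b+1) (Finset.Icc (a+1) b) := by
          ext x; simp only [Finset.mem_Icc, Finset.mem_insert]; omega
        have hnm : (b+1) ∉ Finset.Icc (a+1) b := by
          simp only [Finset.mem_Icc]; omega
        rw [hins, Finset.sum_insert hnm, ih, add_sub_cancel_right]
        ring
    exact main b hab
  have hEab : ∀ a b : ℤ, a ≤ b → ∀ ω,
      (P[Nn n|𝓕 b]) ω - (P[Nn n|𝓕 a]) ω = ∑ k ∈ Finset.Icc (a+1) b, Pk k (Nn n) ω := by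
    intro a b hab ω
    rw [← htel (fun k => (P[Nn n|𝓕 k]) ω) a b hab]
    exact Finset.sum_congr rfl fun k _ => (hPk k (Nn n) ω).symm
  have hδfin : ∀ j, δ j ≠ ⊤ := fun j =>
    ENNReal.ne_top_of_tsum_ne_top (by rw [← hc0]; exact hc0fin) j
  have hPkHsm : ∀ (k i : ℤ), AEStronglyMeasurable (Pk k (H i)) P := by
    intro k i
    have e : Pk k (H i) = P[H i|𝓕 k] - P[H i|𝓕 (k-1)] := funext fun ω => hPk k (H i) ω
    rw [e]
    exact ((stronglyMeasurable_condExp.mono (hFle k)).sub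
      (stronglyMeasurable_condExp.mono (hFle (k-1)))).aestronglyMeasurable
  have hPkfnorm : ∀ k : ℤ, eLpNorm (Pk k (Nn n)) 2 P ≤ ∑ i ∈ I, δ (i - k) := by
    intro k
    have hsum : ∀ (m' : MeasurableSpace Ω),
        P[Nn n|m'] =ᵐ[P] fun ω => ∑ i ∈ I, (P[H i|m']) ω := by
      intro m'
      rw [hfeqPi]
      refine (condExp_finsetSum (fun i _ => hHint i) m').trans ?_
      exact Eventually.of_forall fun ω => by rw [Finset.sum_apply]
    have hce : Pk k (Nn n) =ᵐ[P] fun ω => ∑ i ∈ I, Pk k (H i) ω := by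
      filter_upwards [hsum (𝓕 k), hsum (𝓕 (k-1))] with ω e1 e2
      rw [hPk, e1, e2, ← Finset.sum_sub_distrib]
      exact Finset.sum_congr rfl fun i _ => (hPk k (H i) ω).symm
    rw [eLpNorm_congr_ae hce]
    have e4 : (fun ω => ∑ i ∈ I, Pk k (H i) ω) = ∑ i ∈ I, Pk k (H i) := by
      funext ω; rw [Finset.sum_apply]
    rw [e4]
    refine (eLpNorm_sum_le (fun i _ => hPkHsm k i) one_le_two).trans ?_
    exact le_of_eq (Finset.sum_congr rfl fun i _ => hδstat i k)
  -- ## Part 5 : L² bound for the middle term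
  set d : ℤ → ℝ := fun j => (δ j).toReal with hddef
  set c0' : ℝ := c0.toReal with hc0'def
  have hdnn : ∀ j, 0 ≤ d j := fun j => ENNReal.toReal_nonneg
  have hc0nn : 0 ≤ c0' := ENNReal.toReal_nonneg
  have hdsum : ∀ (F : Finset ℤ), ∑ j ∈ F, d j ≤ c0' := by
    intro F
    have h1 : ∑ j ∈ F, δ j ≤ c0 := by rw [hc0]; exact ENNReal.sum_le_tsum F
    have h2 := ENNReal.toReal_mono hc0fin h1
    rwa [ENNReal.toReal_sum (fun j _ => hδfin j)] at h2
  have hrk : ∀ k : ℤ, (eLpNorm (Pk k (Nn n)) 2 P).toReal ≤ ∑ i ∈ I, d (i - k) := by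
    intro k
    have hfin : (∑ i ∈ I, δ (i - k)) ≠ ⊤ := by
      refine (ENNReal.sum_lt_top.mpr fun i _ => ?_).ne
      exact (hδfin _).lt_top
    have h2 := ENNReal.toReal_mono hfin (hPkfnorm k)
    rwa [ENNReal.toReal_sum (fun i _ => hδfin _)] at h2
  set X : ℤ → Lp ℝ 2 P := fun k => (hPk2 k).toLp _ with hXdef
  have hXnorm : ∀ k, ‖X k‖ = (eLpNorm (Pk k (Nn n)) 2 P).toReal := fun k => Lp.norm_toLp _ _
  have hXorth : ∀ k l : ℤ, k ≠ l → (inner ℝ (X k) (X l) : ℝ) = 0 := by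
    intro k l hne
    rw [L2.inner_def, ← horth k l hne]
    apply integral_congr_ae
    filter_upwards [(hPk2 k).coeFn_toLp, (hPk2 l).coeFn_toLp] with ω e1 e2
    rw [e1, e2]
    simp [RCLike.inner_apply, starRingEnd_apply, star_trivial]; ring
  have hYcoe : ∀ (K : Finset ℤ),
      (⇑(∑ k ∈ K, X k) : Ω → ℝ) =ᵐ[P] fun ω => ∑ k ∈ K, Pk k (Nn n) ω := by
    intro K
    induction K using Finset.induction with
    | empty =>
      simp only [Finset.sum_empty]
      exact Lp.coeFn_zero ℝ 2 P
    | @insert k K' hk ih =>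
      rw [Finset.sum_insert hk]
      filter_upwards [Lp.coeFn_add (X k) (∑ l ∈ K', X l), ih, (hPk2 k).coeFn_toLp]
        with ω e1 e2 e3
      rw [e1]
      simp only [Pi.add_apply]
      rw [e2, e3, Finset.sum_insert hk]
  have hmid : ∀ a b : ℤ, a ≤ b →
      eLpNorm (fun ω => (P[Nn n|𝓕 b]) ω - (P[Nn n|𝓕 a]) ω) 2 P
        ≤ ENNReal.ofReal (c0' * Real.sqrt n) := by
    intro a b hab
    set K := Finset.Icc (a+1) b with hKdef
    have hYb : eLpNorm (fun ω => (P[Nn n|𝓕 b]) ω - (P[Nn n|𝓕 a]) ω) 2 P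
        = ENNReal.ofReal ‖∑ k ∈ K, X k‖ := by
      have h1 : (fun ω => (P[Nn n|𝓕 b]) ω - (P[Nn n|𝓕 a]) ω) =ᵐ[P] ⇑(∑ k ∈ K, X k) := by
        filter_upwards [hYcoe K] with ω e
        rw [e]; exact hEab a b hab ω
      rw [eLpNorm_congr_ae h1, Lp.norm_def, ENNReal.ofReal_toReal (Lp.eLpNorm_ne_top _)]
    rw [hYb]
    apply ENNReal.ofReal_le_ofReal
    have hnormsq : ‖∑ k ∈ K, X k‖^2 = ∑ k ∈ K, ‖X k‖^2 := by
      rw [← real_inner_self_eq_norm_sq, sum_inner]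
      refine Finset.sum_congr rfl fun k hk => ?_
      rw [inner_sum, Finset.sum_eq_single_of_mem k hk
        (fun l _ hlk => hXorth k l fun e => hlk e.symm), real_inner_self_eq_norm_sq]
    have hdsum2 : ∀ k : ℤ, ∑ i ∈ I, d (i - k) ≤ c0' := by
      intro k
      rw [show ∑ i ∈ I, d (i-k) = ∑ j ∈ I.image (fun i => i - k), d j from
        (Finset.sum_image (fun p _ q _ hpq => by omega)).symm]
      exact hdsum _
    have hsq : ‖∑ k ∈ K, X k‖^2 ≤ c0'^2 * n := by
      rw [hnormsq]
      have hb1 : ∀ k ∈ K, ‖X k‖^2 ≤ c0' * ∑ i ∈ I, d (i - k) := by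
        intro k _
        have hXle : ‖X k‖ ≤ ∑ i ∈ I, d (i - k) := by rw [hXnorm k]; exact hrk k
        calc ‖X k‖^2 = ‖X k‖ * ‖X k‖ := sq ‖X k‖
          _ ≤ (∑ i ∈ I, d (i - k)) * (∑ i ∈ I, d (i - k)) :=
            mul_self_le_mul_self (norm_nonneg _) hXle
          _ ≤ c0' * ∑ i ∈ I, d (i - k) :=
            mul_le_mul_of_nonneg_right (hdsum2 k) (Finset.sum_nonneg fun i _ => hdnn _)
      calc ∑ k ∈ K, ‖X k‖^2 ≤ ∑ k ∈ K, c0' * ∑ i ∈ I, d (i-k) := Finset.sum_le_sum hb1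
        _ = c0' * ∑ k ∈ K, ∑ i ∈ I, d (i-k) := by rw [Finset.mul_sum]
        _ = c0' * ∑ i ∈ I, ∑ k ∈ K, d (i-k) := by rw [Finset.sum_comm]
        _ ≤ c0' * ∑ _i ∈ I, c0' := by
            refine mul_le_mul_of_nonneg_left (Finset.sum_le_sum fun i _ => ?_) hc0nn
            rw [show ∑ k ∈ K, d (i-k) = ∑ j ∈ K.image (fun k => i - k), d j from
              (Finset.sum_image (fun p _ q _ hpq => by omega)).symm]
            exact hdsum _
        _ = c0'^2 * n := by
            rw [Finset.sum_const, hIcard, nsmul_eq_mul]; ring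
    nlinarith [Real.sq_sqrt (by positivity : (0:ℝ) ≤ (n:ℝ)),
      norm_nonneg (∑ k ∈ K, X k), Real.sqrt_nonneg (n:ℝ),
      mul_nonneg hc0nn (Real.sqrt_nonneg (n:ℝ))]
  -- ## Part 6 : finite-range approximation
  have hEH : ∀ i : ℤ, ∫ ω, H i ω ∂P = π1 := by
    intro i
    have hset : MeasurableSet {ω | H i ω = 1} := by
      have e : {ω | H i ω = 1} = H i ⁻¹' {1} := rfl
      rw [e]; exact (hHmeas i) (measurableSet_singleton 1)
    have hind : H i = Set.indicator {ω | H i ω = 1} (fun _ => (1:ℝ)) := by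
      funext ω
      rcases hH01 i ω with e | e
      · rw [e, Set.indicator_of_notMem]
        intro hmem
        rw [Set.mem_setOf_eq, e] at hmem
        norm_num at hmem
      · rw [e, Set.indicator_of_mem]
        exact e
    rw [hind, integral_indicator_const (1:ℝ) hset, smul_eq_mul, mul_one, measureReal_def, hπ1 i]
  have hEf : ∫ ω, Nn n ω ∂P = n * π1 := by
    rw [hfeq, integral_finset_sum I (fun i _ => hHint i)]
    calc ∑ i ∈ I, ∫ ω, H i ω ∂P = ∑ _i ∈ I, π1 := Finset.sum_congr rfl fun i _ => hEH i
      _ = n * π1 := by rw [Finset.sum_const, hIcard, nsmul_eq_mul]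
  set 𝒦 : ℕ → MeasurableSpace Ω := fun m =>
    ⨆ j : ℤ, ⨆ _ : j ∈ Set.Icc (-(m:ℤ)) (m:ℤ), MeasurableSpace.comap (η j) inferInstance
    with h𝒦def
  have h𝒦le : ∀ m, 𝒦 m ≤ m0 := fun m => iSup₂_le fun j _ => (hηmeas j).comap_le
  have h𝒦mono : Monotone 𝒦 := by
    intro p q hpq
    have hpq' : (p:ℤ) ≤ (q:ℤ) := by exact_mod_cast hpq
    refine iSup₂_le fun j hj => le_iSup₂_of_le j ?_ le_rfl
    simp only [Set.mem_Icc] at hj ⊢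
    omega
  have hfK : StronglyMeasurable[⨆ m, 𝒦 m] (Nn n) := by
    have hηK : ∀ j : ℤ, MeasurableSpace.comap (η j) inferInstance ≤ ⨆ m, 𝒦 m := by
      intro j
      refine le_trans ?_ (le_iSup 𝒦 j.natAbs)
      refine le_iSup₂_of_le j ?_ le_rfl
      simp only [Set.mem_Icc]
      omega
    have e0 : (MeasurableSpace.pi : MeasurableSpace (ℤ→ℝ))
        = ⨆ j : ℤ, MeasurableSpace.comap (fun x : ℤ→ℝ => x j) inferInstance := rfl
    have e1 : MeasurableSpace.pi.comap T
        = ⨆ j : ℤ, MeasurableSpace.comap (η j) inferInstance := by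
      rw [e0]
      simp only [MeasurableSpace.comap_iSup]
      refine iSup_congr fun j => ?_
      rw [MeasurableSpace.comap_comp]
      rfl
    have hTK : Measurable[⨆ m, 𝒦 m] T :=
      Measurable.of_comap_le (by rw [e1]; exact iSup_le hηK)
    have hGsum : Measurable (fun x => ∑ i ∈ I, G i x) :=
      Finset.measurable_sum I fun i _ => hGmeas i
    have efg : Nn n = (fun x => ∑ i ∈ I, G i x) ∘ T := by
      funext ω
      rw [hfeq]
      exact Finset.sum_congr rfl fun i _ => (hGT i ω).symm
    have hmK : Measurable[⨆ m, 𝒦 m] (Nn n) := by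
      rw [efg]
      exact hGsum.comp hTK
    exact hmK.stronglyMeasurable
  have hlevy : Tendsto (fun m => eLpNorm (P[Nn n|𝒦 m] - Nn n) 1 P) atTop (𝓝 0) :=
    hfint.tendsto_eLpNorm_condExp (ℱ := ⟨𝒦, h𝒦mono, h𝒦le⟩) hfK
  have hL12 : ∀ (g : Ω → ℝ) (C : ℝ≥0∞), C ≠ ⊤ →
      (∀ᵐ ω ∂P, (‖g ω‖₊ : ℝ≥0∞) ≤ C) →
      eLpNorm g 2 P ≤ (C * eLpNorm g 1 P) ^ (1/2 : ℝ) := by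
    intro g C hCt hgb
    rw [eLpNorm_eq_lintegral_rpow_enorm_toReal two_ne_zero ENNReal.ofNat_ne_top,
      eLpNorm_one_eq_lintegral_enorm]
    simp only [ENNReal.toReal_ofNat]
    apply ENNReal.rpow_le_rpow _ (by norm_num)
    calc ∫⁻ x, (‖g x‖₊ : ℝ≥0∞) ^ (2:ℝ) ∂P ≤ ∫⁻ x, C * (‖g x‖₊ : ℝ≥0∞) ∂P := by
          apply lintegral_mono_ae
          filter_upwards [hgb] with ω e
          calc (‖g ω‖₊ : ℝ≥0∞) ^ (2:ℝ) = (‖g ω‖₊ : ℝ≥0∞) * (‖g ω‖₊:ℝ≥0∞) := by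
                rw [show (2:ℝ) = ((2:ℕ):ℝ) by norm_num, ENNReal.rpow_natCast, sq]
            _ ≤ C * (‖g ω‖₊:ℝ≥0∞) := mul_le_mul_left e _
      _ = C * ∫⁻ x, (‖g x‖₊:ℝ≥0∞) ∂P := lintegral_const_mul' C _ hCt
  have happrox : ∀ εr : ℝ, 0 < εr → ∃ m : ℕ,
      eLpNorm (fun ω => (P[Nn n|𝒦 m]) ω - Nn n ω) 2 P ≤ ENNReal.ofReal εr := by
    intro εr hεr
    set C : ℝ≥0∞ := 2 * (n:ℝ≥0∞) + 1 with hCdef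
    have hC0 : C ≠ 0 := by simp [hCdef]
    have hCt : C ≠ ⊤ := by
      rw [hCdef]
      exact ENNReal.add_ne_top.mpr ⟨ENNReal.mul_ne_top (by norm_num) (ENNReal.natCast_ne_top n),
        ENNReal.one_ne_top⟩
    have hεlt : (0:ℝ≥0∞) < ENNReal.ofReal εr ^ (2:ℕ) / C := by
      refine ENNReal.div_pos (pow_ne_zero 2 ?_) hCt
      simp only [ne_eq, ENNReal.ofReal_eq_zero, not_le]
      linarith
    obtain ⟨m, hm⟩ :=
      ((ENNReal.tendsto_nhds_zero.mp hlevy) (ENNReal.ofReal εr ^ (2:ℕ) / C) hεlt).exists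
    refine ⟨m, ?_⟩
    have hbd : ∀ᵐ ω ∂P, (‖(P[Nn n|𝒦 m]) ω - Nn n ω‖₊ : ℝ≥0∞) ≤ C := by
      filter_upwards [hcEb (𝒦 m)] with ω e
      have h1 : |(P[Nn n|𝒦 m]) ω - Nn n ω| ≤ 2*(n:ℝ)+1 := by
        have h2 := hfb ω
        rw [Real.norm_eq_abs] at h2
        calc |(P[Nn n|𝒦 m]) ω - Nn n ω| ≤ |(P[Nn n|𝒦 m]) ω| + |Nn n ω| := abs_sub _ _
          _ ≤ 2*(n:ℝ)+1 := by linarith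
      calc (‖(P[Nn n|𝒦 m]) ω - Nn n ω‖₊ : ℝ≥0∞)
          = ENNReal.ofReal |(P[Nn n|𝒦 m]) ω - Nn n ω| := by
            rw [← Real.enorm_eq_ofReal_abs]; rfl
        _ ≤ ENNReal.ofReal (2*(n:ℝ)+1) := ENNReal.ofReal_le_ofReal h1
        _ = C := by
            rw [ENNReal.ofReal_add (by positivity) (by norm_num),
              ENNReal.ofReal_mul (by norm_num), hCdef]
            simp
    have hKm := hL12 (P[Nn n|𝒦 m] - Nn n) C hCt hbd
    calc eLpNorm (fun ω => (P[Nn n|𝒦 m]) ω - Nn n ω) 2 P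
        = eLpNorm (P[Nn n|𝒦 m] - Nn n) 2 P := rfl
      _ ≤ (C * eLpNorm (P[Nn n|𝒦 m] - Nn n) 1 P) ^ (1/2:ℝ) := hKm
      _ ≤ (C * (ENNReal.ofReal εr ^ (2:ℕ) / C)) ^ (1/2:ℝ) := by
          apply ENNReal.rpow_le_rpow _ (by norm_num)
          exact mul_le_mul_right hm C
      _ = (ENNReal.ofReal εr ^ (2:ℕ)) ^ (1/2:ℝ) := by
          rw [ENNReal.mul_div_cancel hC0 hCt]
      _ = ENNReal.ofReal εr := by
          rw [← ENNReal.rpow_natCast _ 2, ← ENNReal.rpow_mul]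
          norm_num
  -- ## Part 7 : conclusion
  apply ENNReal.le_of_forall_pos_le_add
  intro εr hεr _
  have hε3 : (0:ℝ) < (εr:ℝ) / 3 := by positivity
  obtain ⟨m, hm⟩ := happrox ((εr:ℝ)/3) hε3
  set a : ℤ := -(m:ℤ) - 1 with hadef
  set b : ℤ := (m:ℤ) with hbdef
  set fm : Ω → ℝ := P[Nn n|𝒦 m] with hfmdef
  have hab : a ≤ b := by rw [hadef, hbdef]; omega
  have hfmsm : StronglyMeasurable[𝒦 m] fm := stronglyMeasurable_condExp
  have hfmsm0 : AEStronglyMeasurable fm P := (hfmsm.mono (h𝒦le m)).aestronglyMeasurable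
  have hfmb : ∀ᵐ ω ∂P, |fm ω| ≤ (n:ℝ) := hcEb (𝒦 m)
  have hfmint : Integrable fm P := integrable_condExp
  have hEbsm : AEStronglyMeasurable (P[Nn n|𝓕 b]) P :=
    (stronglyMeasurable_condExp.mono (hFle b)).aestronglyMeasurable
  have hEasm : AEStronglyMeasurable (P[Nn n|𝓕 a]) P :=
    (stronglyMeasurable_condExp.mono (hFle a)).aestronglyMeasurable
  have hgsm : AEStronglyMeasurable (fun ω => fm ω - Nn n ω) P :=
    hfmsm0.sub hfmeas.aestronglyMeasurable
  have hgsm' : AEStronglyMeasurable (fun ω => Nn n ω - fm ω) P :=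
    hfmeas.aestronglyMeasurable.sub hfmsm0
  have hC : ((2*n+1 : ℝ≥0) : ℝ) = 2*(n:ℝ)+1 := by push_cast; ring
  have hgb : ∀ᵐ ω ∂P, |fm ω - Nn n ω| ≤ ((2*n+1 : ℝ≥0) : ℝ) := by
    filter_upwards [hfmb] with ω e
    have h2 := hfb ω
    rw [Real.norm_eq_abs] at h2
    rw [hC]
    calc |fm ω - Nn n ω| ≤ |fm ω| + |Nn n ω| := abs_sub _ _
      _ ≤ 2*(n:ℝ)+1 := by linarith
  have hgb' : ∀ᵐ ω ∂P, |Nn n ω - fm ω| ≤ ((2*n+1 : ℝ≥0) : ℝ) := by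
    filter_upwards [hgb] with ω e
    rwa [abs_sub_comm]
  have hmnorm' : eLpNorm (fun ω => Nn n ω - fm ω) 2 P ≤ ENNReal.ofReal ((εr:ℝ)/3) := by
    rw [show (fun ω => Nn n ω - fm ω) = -(fun ω => fm ω - Nn n ω) from
      funext fun ω => by simp, eLpNorm_neg]
    exact hm
  -- piece fm − E_b f
  have h𝒦Fb : 𝒦 m ≤ 𝓕 b := by
    refine iSup₂_le fun j hj => ?_
    rw [h𝓕 b]
    exact le_iSup₂_of_le j hj.2 le_rfl
  have hEbfm : P[fm|𝓕 b] = fm :=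
    condExp_of_stronglyMeasurable (hFle b) (hfmsm.mono h𝒦Fb) hfmint
  have hA2 : (fun ω => fm ω - (P[Nn n|𝓕 b]) ω) =ᵐ[P]
      P[(fun ω => fm ω - Nn n ω)|𝓕 b] := by
    have h2 := condExp_sub hfmint hfint (m := 𝓕 b)
    filter_upwards [h2] with ω e
    rw [show (fun ω => fm ω - Nn n ω) = fm - Nn n from rfl, e, Pi.sub_apply, hEbfm]
  have hA2n : eLpNorm (fun ω => fm ω - (P[Nn n|𝓕 b]) ω) 2 P
      ≤ ENNReal.ofReal ((εr:ℝ)/3) := by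
    rw [eLpNorm_congr_ae hA2]
    exact (aux_contr P (hFle b) _ (2*n+1) hgsm hgb).trans hm
  have hT1 : eLpNorm (fun ω => Nn n ω - (P[Nn n|𝓕 b]) ω) 2 P
      ≤ ENNReal.ofReal ((εr:ℝ)/3) + ENNReal.ofReal ((εr:ℝ)/3) := by
    have e : (fun ω => Nn n ω - (P[Nn n|𝓕 b]) ω)
        = fun ω => (Nn n ω - fm ω) + (fm ω - (P[Nn n|𝓕 b]) ω) := funext fun ω => by ring
    rw [e]
    refine (eLpNorm_add_le hgsm' (hfmsm0.sub hEbsm) one_le_two).trans ?_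
    exact add_le_add hmnorm' hA2n
  -- independence piece
  have hIndep : Indep (𝒦 m) (𝓕 a) P := by
    have h4 := indep_biSup_compl (fun j : ℤ => (hηmeas j).comap_le) hηiid.iIndep
      (Set.Icc (-(m:ℤ)) (m:ℤ))
    refine indep_of_indep_of_le_right h4 ?_
    rw [h𝓕 a]
    refine iSup₂_le fun j hj => ?_
    rw [hadef] at hj
    refine le_iSup₂_of_le j ?_ le_rfl
    simp only [Set.mem_compl_iff, Set.mem_Icc, not_and, not_le]
    intro h5
    omega
  have hindfm : P[fm|𝓕 a] =ᵐ[P] fun _ => ∫ ω, fm ω ∂P :=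
    condExp_indep_eq (h𝒦le m) (hFle a) hfmsm hIndep
  have hintfm : ∫ ω, fm ω ∂P = n * π1 := by
    rw [hfmdef, integral_condExp (h𝒦le m), hEf]
  have hC1 : (fun ω => (P[Nn n|𝓕 a]) ω - n * π1) =ᵐ[P]
      fun ω => (P[(fun ω => Nn n ω - fm ω)|𝓕 a]) ω + ((P[fm|𝓕 a]) ω - n * π1) := by
    have h2 := condExp_sub hfint hfmint (m := 𝓕 a)
    filter_upwards [h2] with ω e
    rw [show (fun ω => Nn n ω - fm ω) = Nn n - fm from rfl, e, Pi.sub_apply]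
    ring
  have hC2 : eLpNorm (fun ω => (P[fm|𝓕 a]) ω - n * π1) 2 P = 0 := by
    have e : (fun ω => (P[fm|𝓕 a]) ω - n * π1) =ᵐ[P] (fun _ => (0:ℝ)) := by
      filter_upwards [hindfm] with ω e
      rw [e, hintfm]; ring
    rw [eLpNorm_congr_ae e]
    exact eLpNorm_zero
  have hT3 : eLpNorm (fun ω => (P[Nn n|𝓕 a]) ω - n * π1) 2 P
      ≤ ENNReal.ofReal ((εr:ℝ)/3) := by
    rw [eLpNorm_congr_ae hC1]
    refine (eLpNorm_add_le
      ((stronglyMeasurable_condExp.mono (hFle a)).aestronglyMeasurable)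
      (((stronglyMeasurable_condExp.mono (hFle a)).aestronglyMeasurable).sub
        aestronglyMeasurable_const) one_le_two).trans ?_
    rw [show (P[fm|𝓕 a] - fun _ : Ω => (n:ℝ) * π1)
      = (fun ω => (P[fm|𝓕 a]) ω - (n:ℝ) * π1) from rfl, hC2, add_zero]
    exact (aux_contr P (hFle a) _ (2*n+1) hgsm' hgb').trans hmnorm'
  -- the middle term
  have hc0eq : ENNReal.ofReal (c0' * Real.sqrt n) = c0 * ENNReal.ofReal (Real.sqrt n) := by
    rw [ENNReal.ofReal_mul hc0nn, hc0'def, ENNReal.ofReal_toReal hc0fin]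
  have hT2 : eLpNorm (fun ω => (P[Nn n|𝓕 b]) ω - (P[Nn n|𝓕 a]) ω) 2 P
      ≤ c0 * ENNReal.ofReal (Real.sqrt n) := by
    rw [← hc0eq]
    exact hmid a b hab
  -- assemble
  have hsplit : (fun ω => Nn n ω - n * π1) = fun ω =>
      (Nn n ω - (P[Nn n|𝓕 b]) ω) + (((P[Nn n|𝓕 b]) ω - (P[Nn n|𝓕 a]) ω)
        + ((P[Nn n|𝓕 a]) ω - n * π1)) := funext fun ω => by ring
  have htotal : eLpNorm (fun ω => Nn n ω - n * π1) 2 P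
      ≤ (ENNReal.ofReal ((εr:ℝ)/3) + ENNReal.ofReal ((εr:ℝ)/3))
        + (c0 * ENNReal.ofReal (Real.sqrt n) + ENNReal.ofReal ((εr:ℝ)/3)) := by
    rw [hsplit]
    refine (eLpNorm_add_le (hfmeas.aestronglyMeasurable.sub hEbsm)
      ((hEbsm.sub hEasm).add (hEasm.sub aestronglyMeasurable_const)) one_le_two).trans ?_
    refine add_le_add hT1 ?_
    refine (eLpNorm_add_le (hEbsm.sub hEasm)
      (hEasm.sub aestronglyMeasurable_const) one_le_two).trans ?_
    exact add_le_add hT2 hT3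
  have hsum3 : ENNReal.ofReal ((εr:ℝ)/3) + ENNReal.ofReal ((εr:ℝ)/3)
      + ENNReal.ofReal ((εr:ℝ)/3) = (εr : ℝ≥0∞) := by
    rw [← ENNReal.ofReal_add (by positivity) (by positivity),
      ← ENNReal.ofReal_add (by positivity) (by positivity),
      show (εr:ℝ)/3 + (εr:ℝ)/3 + (εr:ℝ)/3 = (εr:ℝ) by ring]
    exact ENNReal.ofReal_coe_nnreal
  refine htotal.trans (le_of_eq ?_)
  rw [← hsum3]
  ring

end
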